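/- arXiv:1407.4626 — 3 statements merged into one kernel-verified Lean document; each statement's English description precedes it below -/
import Mathlib

section
/- Let A be an n×n Boolean matrix with weight |A| ≥ 2n^{3/2}. Then the number of 2-rectangles in A (pairs of distinct rows and pairs of distinct columns at whose four intersections A has ones) is at least σ²/(2n²) where σ = Σ_i C(a_i, 2), and hence is at least |A|⁴/(32 n⁴) (in particular Ω((|A|/n)⁴)). -/
open Finset

/-- Weight of a Boolean matrix: the number of entries equal to `true` (ones). -/
def weight {α β : Type} [Fintype α] [Fintype β] (M : α → β → Bool) : ℕ :=
  (Finset.univ.filter (fun p : α × β => M p.1 p.2 = true)).card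

/-- Number of ones in row `i` of the matrix `M`. -/
def rowOnes {α β : Type} [Fintype β] (M : α → β → Bool) (i : α) : ℕ :=
  (Finset.univ.filter (fun j => M i j = true)).card

/-- A matrix is `k`-free if it contains no all-ones `k × k` submatrix. -/
def kFree {α β : Type} (M : α → β → Bool) (k : ℕ) : Prop :=
  ¬ ∃ (R : Finset α) (C : Finset β), R.card = k ∧ C.card = k ∧
      ∀ i ∈ R, ∀ j ∈ C, M i j = true

/-- The 2-element subsets of `{1, …, m}` (realized as `Fin m`). -/
abbrev Pairs (m : ℕ) := {s : Finset (Fin m) // s.card = 2}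

/-- The derived matrix `B`, indexed by 2-element subsets: `B[a,b] = 1` iff the
`2 × 2` submatrix of `A` with row set `a` and column set `b` is all ones. -/
def derivedB {m : ℕ} (A : Fin m → Fin m → Bool) (a b : Pairs m) : Bool :=
  decide (∀ i ∈ a.1, ∀ j ∈ b.1, A i j = true)

/-- A rectifier circuit with outputs indexed by `α` and inputs indexed by `β`:
a finite DAG together with a choice of an input vertex for each `β` and an
output vertex for each `α`. Complexity is the number of edges. -/
structure RectCircuit (α β : Type) where
  V : ℕ
  edges : Finset (Fin V × Fin V)
  inputs : β → Fin V
  outputs : α → Fin V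
  acyclic : ∀ v : Fin V, ¬ Relation.TransGen (fun u w => (u, w) ∈ edges) v v

/-- A rectifier circuit implements `M` iff `M i j = 1` exactly when there is a
directed path from input `j` to output `i`. -/
def RectCircuit.implements {α β : Type} (C : RectCircuit α β) (M : α → β → Bool) : Prop :=
  ∀ i j, M i j = true ↔
    Relation.ReflTransGen (fun u w => (u, w) ∈ C.edges) (C.inputs j) (C.outputs i)

/-- A circuit has depth at most `d` if every directed path has at most `d` edges. -/
def RectCircuit.depthLE {α β : Type} (C : RectCircuit α β) (d : ℕ) : Prop :=
  ∀ (f : ℕ → Fin C.V) (L : ℕ), (∀ i < L, (f i, f (i + 1)) ∈ C.edges) → L ≤ d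

/-- `OR(M)`: the minimal number of edges of a rectifier circuit implementing `M`. -/
noncomputable def ORc {α β : Type} (M : α → β → Bool) : ℕ :=
  sInf {k | ∃ C : RectCircuit α β, C.implements M ∧ C.edges.card = k}

/-- `OR_d(M)`: the minimal number of edges of a depth-`d` rectifier circuit
implementing `M`. -/
noncomputable def ORd {α β : Type} (d : ℕ) (M : α → β → Bool) : ℕ :=
  sInf {k | ∃ C : RectCircuit α β, C.implements M ∧ C.depthLE d ∧ C.edges.card = k}

/-!
The 2-rectangles are counted as `∑_u C(b_u, 2)` over column pairs `u`, and `∑_u b_u = σ` by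
double counting. Cauchy–Schwarz over the `n` rows gives `|A|² ≤ n (2σ + |A|)`, and over the
`C(n, 2) ≤ n²/2` column pairs it gives `2σ² ≤ n² (2R + σ)`, `R` the number of rectangles.
The weight hypothesis yields `|A| ≥ 2n` and `|A|² ≥ 4n³`, which absorb the linear terms:
`|A|² ≤ 4nσ`, hence `σ ≥ n²`, hence `σ² ≤ 2n²R`, and `R ≥ σ²/(2n²) ≥ |A|⁴/(32n⁴)`.
-/

theorem sq_eq_two_mul_choose_two_add (k : ℕ) : k ^ 2 = 2 * k.choose 2 + k := by
  induction k with
  | zero => rfl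
  | succ m ih =>
    rw [Nat.choose_succ_succ, Nat.choose_one_right]
    nlinarith [ih]

theorem sq_sum_le_card_mul_two_mul_sum_choose_two_add_sum {ι : Type*} (s : Finset ι)
    (f : ι → ℕ) :
    (∑ i ∈ s, f i) ^ 2 ≤ #s * (2 * ∑ i ∈ s, (f i).choose 2 + ∑ i ∈ s, f i) := by
  have hsq : ∑ i ∈ s, f i ^ 2 = 2 * ∑ i ∈ s, (f i).choose 2 + ∑ i ∈ s, f i := by
    rw [mul_sum, ← sum_add_distrib]
    exact sum_congr rfl fun i _ => sq_eq_two_mul_choose_two_add (f i)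
  exact hsq ▸ sq_sum_le_card_mul_sum_sq

theorem card_filter_subset_eq_choose {α : Type*} [Fintype α] [DecidableEq α] (k : ℕ)
    (S : Finset α) :
    #{t : {s : Finset α // #s = k} | t.1 ⊆ S} = (#S).choose k := by
  rw [← card_powersetCard k S]
  refine card_bij (fun t _ => t.1) (fun t ht => ?_) (fun t _ t' _ => Subtype.ext) fun s hs => ?_
  · exact mem_powersetCard.mpr ⟨(mem_filter.mp ht).2, t.2⟩
  · obtain ⟨hsS, hs⟩ := mem_powersetCard.mp hs
    exact ⟨⟨s, hs⟩, mem_filter.mpr ⟨mem_univ _, hsS⟩, rfl⟩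

theorem weight_eq_sum_rowOnes {α β : Type} [Fintype α] [Fintype β] (M : α → β → Bool) :
    weight M = ∑ i, rowOnes M i := by
  rw [weight, card_filter, Fintype.sum_prod_type]
  exact sum_congr rfl fun i _ => by rw [rowOnes, card_filter]

/-- `b_u`: the number of rows covering the column pair `u`. -/
def pairCover {n : ℕ} (A : Fin n → Fin n → Bool) (u : Pairs n) : ℕ :=
  #{i | ∀ j ∈ u.1, A i j = true}

theorem weight_derivedB_eq_sum_choose_pairCover {n : ℕ} (A : Fin n → Fin n → Bool) :
    weight (derivedB A) = ∑ u, (pairCover A u).choose 2 := by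
  rw [weight, card_filter, Fintype.sum_prod_type, sum_comm]
  refine sum_congr rfl fun u _ => ?_
  rw [← card_filter, pairCover, ← card_filter_subset_eq_choose]
  congr 1
  exact filter_congr fun a _ => by simp [derivedB, subset_iff]

theorem sum_pairCover_eq_sum_choose_rowOnes {n : ℕ} (A : Fin n → Fin n → Bool) :
    ∑ u, pairCover A u = ∑ i, (rowOnes A i).choose 2 := by
  simp_rw [pairCover, card_filter]
  rw [sum_comm]
  refine sum_congr rfl fun i _ => ?_
  rw [← card_filter, rowOnes, ← card_filter_subset_eq_choose]
  congr 1
  exact filter_congr fun u _ => by simp [subset_iff]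

theorem weight_sq_le_mul_sum_choose_rowOnes {n : ℕ} (A : Fin n → Fin n → Bool) :
    weight A ^ 2 ≤ n * (2 * ∑ i, (rowOnes A i).choose 2 + weight A) := by
  simpa [weight_eq_sum_rowOnes] using
    sq_sum_le_card_mul_two_mul_sum_choose_two_add_sum univ (rowOnes A)

theorem two_mul_sq_sum_choose_rowOnes_le {n : ℕ} (A : Fin n → Fin n → Bool) :
    2 * (∑ i, (rowOnes A i).choose 2) ^ 2 ≤
      n ^ 2 * (2 * weight (derivedB A) + ∑ i, (rowOnes A i).choose 2) := by
  have hcs := sq_sum_le_card_mul_two_mul_sum_choose_two_add_sum univ (pairCover A)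
  rw [← weight_derivedB_eq_sum_choose_pairCover, sum_pairCover_eq_sum_choose_rowOnes,
    card_univ, Fintype.card_finset_len, Fintype.card_fin] at hcs
  have hpairs : 2 * n.choose 2 ≤ n ^ 2 := by
    rw [sq_eq_two_mul_choose_two_add n]; omega
  calc 2 * (∑ i, (rowOnes A i).choose 2) ^ 2
      ≤ 2 * n.choose 2 * (2 * weight (derivedB A) + ∑ i, (rowOnes A i).choose 2) := by
        rw [mul_assoc]; exact Nat.mul_le_mul_left 2 hcs
    _ ≤ _ := Nat.mul_le_mul_right _ hpairs

theorem Nat.cast_le_rpow_of_one_le (n : ℕ) {y : ℝ} (hy : 1 ≤ y) : (n : ℝ) ≤ (n : ℝ) ^ y := by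
  rcases n.eq_zero_or_pos with rfl | hn
  · simp [Real.zero_rpow (by linarith : y ≠ 0)]
  · simpa using Real.rpow_le_rpow_of_exponent_le (x := n) (by exact_mod_cast hn) hy

theorem rpow_three_halves_sq {x : ℝ} (hx : 0 ≤ x) : (x ^ ((3 : ℝ) / 2)) ^ 2 = x ^ 3 := by
  rw [← Real.rpow_natCast, ← Real.rpow_mul hx, ← Real.rpow_natCast]
  norm_num

/-- If `|A| ≥ 2 n^{3/2}`, then the number of 2-rectangles of `A`
(the weight of the derived matrix `B`) is at least `σ²/(2n²)` where
`σ = ∑_i C(a_i, 2)`, hence at least `|A|⁴/(32 n⁴)`. -/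
theorem stmt3 (n : ℕ) (A : Fin n → Fin n → Bool)
    (h : (weight A : ℝ) ≥ 2 * (n : ℝ) ^ ((3 : ℝ) / 2)) :
    (weight (derivedB A) : ℝ) ≥
        ((∑ i, Nat.choose (rowOnes A i) 2 : ℕ) : ℝ) ^ 2 / (2 * (n : ℝ) ^ 2) ∧
    (weight (derivedB A) : ℝ) ≥ (weight A : ℝ) ^ 4 / (32 * (n : ℝ) ^ 4) := by
  set w : ℝ := (weight A : ℝ)
  set σ : ℝ := ((∑ i, (rowOnes A i).choose 2 : ℕ) : ℝ)
  set R : ℝ := (weight (derivedB A) : ℝ)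
  have hrow : w ^ 2 ≤ n * (2 * σ + w) := by
    simp only [w, σ]; exact_mod_cast weight_sq_le_mul_sum_choose_rowOnes A
  have hcol : 2 * σ ^ 2 ≤ n ^ 2 * (2 * R + σ) := by
    simp only [σ, R]; exact_mod_cast two_mul_sq_sum_choose_rowOnes_le A
  have hn : (0 : ℝ) ≤ n := n.cast_nonneg
  have hw : 2 * n ≤ w := by linarith [Nat.cast_le_rpow_of_one_le n (by norm_num : (1 : ℝ) ≤ 3 / 2)]
  have hw3 : 4 * n ^ 3 ≤ w ^ 2 := by
    nlinarith [rpow_three_halves_sq hn, Real.rpow_nonneg hn ((3 : ℝ) / 2)]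
  have hσw : w ^ 2 ≤ 4 * n * σ := by nlinarith
  have hσ : n ^ 2 ≤ σ := by
    rcases hn.eq_or_lt with h0 | hpos
    · rw [← h0, sq, zero_mul]; exact Nat.cast_nonneg _
    · nlinarith
  have hRσ : σ ^ 2 ≤ 2 * n ^ 2 * R := by nlinarith
  refine ⟨div_le_of_le_mul₀ (by positivity) (by positivity) (by linarith),
    div_le_of_le_mul₀ (by positivity) (by positivity) ?_⟩
  calc w ^ 4 = (w ^ 2) ^ 2 := by ring
    _ ≤ (4 * n * σ) ^ 2 := by gcongr
    _ = 16 * n ^ 2 * σ ^ 2 := by ring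
    _ ≤ R * (32 * n ^ 4) := by nlinarith
end

section
/- Let A be an m×m Boolean matrix and let n = C(m,2). Define the n×n Boolean matrix B, indexed by 2-element subsets of {1,...,m}, by B[a,b] = 1 iff the 2×2 submatrix of A with row set a and column set b is all ones (i.e., a × b is a 2-rectangle of A, with a indexing rows and b indexing columns). If A is k-free (contains no all-ones k×k submatrix), then B is K-free for K = C(k−1, 2) + 1. -/
open Finset

/-!
An all-ones `K × K` submatrix of `B` on row pairs `R` and column pairs `C` yields an all-ones
submatrix of `A` on the unions `⋃ R` and `⋃ C`. Since `R` consists of `K` distinct pairs inside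
`⋃ R`, we get `K ≤ C(|⋃ R|, 2)`; as `K > C(k - 1, 2)`, this forces `|⋃ R| ≥ k`, and likewise
for `⋃ C`, so `A` contains an all-ones `k × k` submatrix.
-/

lemma card_le_choose_card_sup {ι α : Type*} [DecidableEq α] {r : ℕ} {R : Finset ι}
    {f : ι → Finset α} (hf : Set.InjOn f R) (hcard : ∀ i ∈ R, #(f i) = r) :
    #R ≤ (#(R.sup f)).choose r := by
  rw [← card_powersetCard, ← card_image_of_injOn hf]
  refine card_le_card fun s hs => ?_
  obtain ⟨i, hi, rfl⟩ := mem_image.1 hs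
  exact mem_powersetCard.2 ⟨le_sup hi, hcard i hi⟩

lemma le_card_sup_of_choose_lt {m k : ℕ} {R : Finset (Pairs m)}
    (hR : (k - 1).choose 2 < #R) : k ≤ #(R.sup Subtype.val) := by
  by_contra! hlt
  have hsup : #R ≤ (#(R.sup Subtype.val)).choose 2 :=
    card_le_choose_card_sup Subtype.val_injective.injOn fun a _ => a.2
  have hmono : (#(R.sup Subtype.val)).choose 2 ≤ (k - 1).choose 2 :=
    Nat.choose_le_choose 2 (by omega)
  omega

lemma not_kFree_of_le_card {α β : Type} {M : α → β → Bool} {k : ℕ} {S : Finset α}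
    {T : Finset β} (hS : k ≤ #S) (hT : k ≤ #T) (hST : ∀ i ∈ S, ∀ j ∈ T, M i j = true) :
    ¬ kFree M k := by
  obtain ⟨S', hS'S, hS'⟩ := exists_subset_card_eq hS
  obtain ⟨T', hT'T, hT'⟩ := exists_subset_card_eq hT
  exact fun hfree => hfree ⟨S', T', hS', hT', fun i hi j hj => hST i (hS'S hi) j (hT'T hj)⟩

lemma derivedB_eq_true_on_sup {m : ℕ} {A : Fin m → Fin m → Bool} {R C : Finset (Pairs m)}
    (hB : ∀ a ∈ R, ∀ b ∈ C, derivedB A a b = true) :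
    ∀ i ∈ R.sup Subtype.val, ∀ j ∈ C.sup Subtype.val, A i j = true := by
  intro i hi j hj
  obtain ⟨a, ha, hia⟩ := mem_sup.1 hi
  obtain ⟨b, hb, hjb⟩ := mem_sup.1 hj
  exact of_decide_eq_true (hB a ha b hb) i hia j hjb

/-- If `A` is `k`-free, then the derived matrix `B` is `K`-free
for `K = C(k−1, 2) + 1`. -/
theorem stmt7 (m k : ℕ) (A : Fin m → Fin m → Bool) (h : kFree A k) :
    kFree (derivedB A) ((k - 1).choose 2 + 1) := by
  rintro ⟨R, C, hR, hC, hB⟩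
  exact not_kFree_of_le_card (le_card_sup_of_choose_lt (by omega))
    (le_card_sup_of_choose_lt (by omega)) (derivedB_eq_true_on_sup hB) h
end

section
/- If A is a 3-free m×m Boolean matrix with |A| ≥ c·m^{5/3} for a constant c > 0 (and m large enough that |A| ≥ 2m^{3/2}), then the derived 2-rectangle matrix B of size n = C(m,2) satisfies |B| ≥ |A|⁴/(32 m⁴) = Ω(m^{8/3}) = Ω(n^{4/3}). -/
/-!
Let `d j` be the number of ones in column `j` of `A` and `e a` the number of columns that are one
on both rows of the row pair `a`. Double counting gives `|A| = ∑ d j`,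
`∑ e a = ∑ (d j).choose 2` and `|B| = ∑ (e a).choose 2`. Cauchy–Schwarz turns `∑ f i = S` into
`S² ≤ 4 N ∑ (f i).choose 2` as soon as `S ≥ 2 N`, where `N` is the number of indices. Applied to
the columns (`N = m`) and then to the row pairs (`N = m.choose 2`) it yields
`|A|² ≤ 4 m ∑ e a` and `(∑ e a)² ≤ 2 m² |B|`; the hypothesis `|A| ≥ 2 m^{3/2}` is what makes both
applications legal.
-/

open Finset

def commonCols {m : ℕ} (A : Fin m → Fin m → Bool) (s : Finset (Fin m)) : Finset (Fin m) :=
  univ.filter fun j => ∀ i ∈ s, A i j = true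

def colSupport {α β : Type} [Fintype α] (M : α → β → Bool) (j : β) : Finset α :=
  univ.filter fun i => M i j = true

lemma two_mul_choose_two_add_self (t : ℕ) : 2 * t.choose 2 + t = t ^ 2 := by
  rw [Nat.choose_two_right, Nat.mul_div_cancel' (Nat.even_mul_pred_self t).two_dvd]
  cases t <;> simp [sq, Nat.mul_succ]

lemma sq_sum_le_card_mul_two_mul_sum_choose_two_add {ι : Type} [Fintype ι] (f : ι → ℕ) :
    (∑ i, f i) ^ 2 ≤ Fintype.card ι * (2 * ∑ i, (f i).choose 2 + ∑ i, f i) := by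
  calc (∑ i, f i) ^ 2 ≤ Fintype.card ι * ∑ i, f i ^ 2 := sq_sum_le_card_mul_sum_sq
    _ = _ := by simp only [mul_sum, ← sum_add_distrib, two_mul_choose_two_add_self]

lemma sq_sum_le_four_mul_card_mul_sum_choose_two {ι : Type} [Fintype ι] (f : ι → ℕ)
    (hf : 2 * Fintype.card ι ≤ ∑ i, f i) :
    (∑ i, f i) ^ 2 ≤ 4 * Fintype.card ι * ∑ i, (f i).choose 2 := by
  have := sq_sum_le_card_mul_two_mul_sum_choose_two_add f
  nlinarith

lemma card_pairs_subset {m : ℕ} (S : Finset (Fin m)) :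
    #{b : Pairs m | b.1 ⊆ S} = S.card.choose 2 := by
  rw [← card_powersetCard]
  refine card_bij (fun b _ => b.1) (fun b hb => ?_) (fun b _ b' _ h => Subtype.ext h)
    (fun t ht => ?_)
  · exact mem_powersetCard.2 ⟨(mem_filter.1 hb).2, b.2⟩
  · rw [mem_powersetCard] at ht
    exact ⟨⟨t, ht.2⟩, by simp [ht.1], rfl⟩

lemma card_pairs (m : ℕ) : Fintype.card (Pairs m) = m.choose 2 := by
  simp [Fintype.card_subtype]

lemma weight_eq_sum_card_colSupport {α β : Type} [Fintype α] [Fintype β] (M : α → β → Bool) :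
    weight M = ∑ j, #(colSupport M j) := by
  rw [weight, card_filter, Fintype.sum_prod_type, sum_comm]
  simp only [colSupport, card_filter]

lemma sum_card_commonCols {m : ℕ} (A : Fin m → Fin m → Bool) :
    ∑ a : Pairs m, #(commonCols A a.1) = ∑ j, (#(colSupport A j)).choose 2 := by
  have hmem : ∀ (a : Pairs m) j, j ∈ commonCols A a.1 ↔ a.1 ⊆ colSupport A j := by
    intro a j
    simp [commonCols, colSupport, subset_iff]
  calc ∑ a : Pairs m, #(commonCols A a.1)
      = ∑ a : Pairs m, #{j | a.1 ⊆ colSupport A j} := by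
        simp only [← hmem, filter_mem_eq_inter, univ_inter]
    _ = ∑ j, #{a : Pairs m | a.1 ⊆ colSupport A j} := by
        simp only [card_filter]
        exact sum_comm
    _ = _ := by simp only [card_pairs_subset]

lemma weight_derivedB {m : ℕ} (A : Fin m → Fin m → Bool) :
    weight (derivedB A) = ∑ a : Pairs m, (#(commonCols A a.1)).choose 2 := by
  rw [weight, card_filter, Fintype.sum_prod_type]
  refine sum_congr rfl fun a _ => ?_
  rw [← card_filter, ← card_pairs_subset]
  congr 1
  ext b
  simp only [derivedB, commonCols, subset_iff, mem_filter, mem_univ, true_and, decide_eq_true_eq]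
  exact forall₂_comm

theorem weight_pow_four_le_weight_derivedB {m : ℕ} (A : Fin m → Fin m → Bool)
    (hA : 4 * m ^ 3 ≤ weight A ^ 2) :
    weight A ^ 4 ≤ 32 * m ^ 4 * weight (derivedB A) := by
  set w := weight A
  set P := ∑ a : Pairs m, #(commonCols A a.1)
  have hchoose : 2 * m.choose 2 ≤ m ^ 2 := by
    have := two_mul_choose_two_add_self m
    omega
  rcases Nat.eq_zero_or_pos m with rfl | hm
  · simp [w, weight]
  have hwm : 2 * m ≤ w := by
    refine (Nat.pow_le_pow_iff_left two_ne_zero).1 (le_trans ?_ hA)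
    nlinarith
  have hwP : w ^ 2 ≤ 4 * m * P := by
    have := sq_sum_le_four_mul_card_mul_sum_choose_two (fun j => #(colSupport A j))
    rw [Fintype.card_fin, ← weight_eq_sum_card_colSupport, ← sum_card_commonCols] at this
    exact this hwm
  have hmP : m ^ 2 ≤ P := by
    refine Nat.le_of_mul_le_mul_left ?_ (by positivity : 0 < 4 * m)
    nlinarith
  have hPQ : P ^ 2 ≤ 4 * m.choose 2 * weight (derivedB A) := by
    have := sq_sum_le_four_mul_card_mul_sum_choose_two (fun a : Pairs m => #(commonCols A a.1))
    rw [card_pairs, ← weight_derivedB] at this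
    exact this (hchoose.trans hmP)
  calc w ^ 4 = (w ^ 2) ^ 2 := by ring
    _ ≤ (4 * m * P) ^ 2 := by gcongr
    _ = 16 * m ^ 2 * P ^ 2 := by ring
    _ ≤ 16 * m ^ 2 * (2 * (2 * m.choose 2) * weight (derivedB A)) := by
        gcongr; linarith
    _ ≤ 16 * m ^ 2 * (2 * m ^ 2 * weight (derivedB A)) := by gcongr
    _ = 32 * m ^ 4 * weight (derivedB A) := by ring

lemma mul_rpow_eight_thirds_le_div {M c w : ℝ} (hM : 0 ≤ M) (hc : 0 ≤ c)
    (hw : c * M ^ ((5 : ℝ) / 3) ≤ w) :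
    c ^ 4 * M ^ ((8 : ℝ) / 3) ≤ w ^ 4 / M ^ 4 := by
  rcases hM.eq_or_lt with rfl | hM
  · simp [Real.zero_rpow]
  rw [le_div_iff₀ (by positivity)]
  calc c ^ 4 * M ^ ((8 : ℝ) / 3) * M ^ 4 = (c * M ^ ((5 : ℝ) / 3)) ^ 4 := by
        rw [mul_pow, ← Real.rpow_natCast (M ^ _), ← Real.rpow_mul hM.le, ← Real.rpow_natCast M,
          mul_assoc, ← Real.rpow_add hM]
        norm_num
    _ ≤ w ^ 4 := by gcongr

theorem stmt14_general (m : ℕ) (c : ℝ) (hc : 0 < c) (A : Fin m → Fin m → Bool)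
    (hw : (weight A : ℝ) ≥ c * (m : ℝ) ^ ((5 : ℝ) / 3))
    (hw2 : (weight A : ℝ) ≥ 2 * (m : ℝ) ^ ((3 : ℝ) / 2)) :
    (weight (derivedB A) : ℝ) ≥ (weight A : ℝ) ^ 4 / (32 * (m : ℝ) ^ 4) ∧
    (weight (derivedB A) : ℝ) ≥ c ^ 4 * (m : ℝ) ^ ((8 : ℝ) / 3) / 32 := by
  have hcube : 4 * m ^ 3 ≤ weight A ^ 2 := by
    have hsq : ((m : ℝ) ^ ((3 : ℝ) / 2)) ^ 2 = (m : ℝ) ^ 3 := by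
      rw [← Real.rpow_natCast, ← Real.rpow_mul (Nat.cast_nonneg m)]
      norm_num
    have : (4 * m ^ 3 : ℝ) ≤ (weight A : ℝ) ^ 2 := by
      calc (4 * m ^ 3 : ℝ) = (2 * (m : ℝ) ^ ((3 : ℝ) / 2)) ^ 2 := by rw [mul_pow, hsq]; ring
        _ ≤ (weight A : ℝ) ^ 2 := by gcongr
    exact_mod_cast this
  have hmain : (weight A : ℝ) ^ 4 / (32 * (m : ℝ) ^ 4) ≤ weight (derivedB A) := by
    refine div_le_of_le_mul₀ (by positivity) (by positivity) ?_
    rw [mul_comm]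
    exact_mod_cast weight_pow_four_le_weight_derivedB A hcube
  refine ⟨hmain, le_trans ?_ hmain⟩
  calc c ^ 4 * (m : ℝ) ^ ((8 : ℝ) / 3) / 32 ≤ (weight A : ℝ) ^ 4 / (m : ℝ) ^ 4 / 32 := by
        gcongr
        exact mul_rpow_eight_thirds_le_div (Nat.cast_nonneg m) hc.le hw
    _ = (weight A : ℝ) ^ 4 / (32 * (m : ℝ) ^ 4) := by rw [div_div, mul_comm]

/-- If `A` is 3-free with `|A| ≥ c·m^{5/3}` (and `|A| ≥ 2 m^{3/2}`),
then `|B| ≥ |A|⁴/(32 m⁴) ≥ c⁴ m^{8/3} / 32`, i.e. `|B| = Ω(n^{4/3})`. -/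
theorem stmt14 (m : ℕ) (c : ℝ) (hc : 0 < c) (A : Fin m → Fin m → Bool)
    (h3 : kFree A 3)
    (hw : (weight A : ℝ) ≥ c * (m : ℝ) ^ ((5 : ℝ) / 3))
    (hw2 : (weight A : ℝ) ≥ 2 * (m : ℝ) ^ ((3 : ℝ) / 2)) :
    (weight (derivedB A) : ℝ) ≥ (weight A : ℝ) ^ 4 / (32 * (m : ℝ) ^ 4) ∧
    (weight (derivedB A) : ℝ) ≥ c ^ 4 * (m : ℝ) ^ ((8 : ℝ) / 3) / 32 :=
  stmt14_general m c hc A hw hw2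
end
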